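/- arXiv:1609.04987 — 6 statements merged into one kernel-verified Lean document; each statement's English description precedes it below -/
import Mathlib

section
/- Let R be a commutative ring that is an integral domain, let I be a linearly ordered cancellative additive commutative monoid (so the order is total, addition is cancellative, and i ≤ i' together with j ≤ j' implies i + j ≤ i' + j'), and let A be an associative unital R-algebra equipped with a compatibly ordered basis indexed by I. Then A has no zero divisors: for all x, y ∈ A, if x · y = 0 then x = 0 or y = 0. -/
/-!
Compare leading terms. If `i₀` and `j₀` are the largest indices occurring in `x` and `y`, then
the only pair `(i, j)` of indices of `x` and `y` with `i + j = i₀ + j₀` is `(i₀, j₀)`, because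
the monoid is ordered and cancellative. So the `b (i₀ + j₀)`-coefficient of `x * y` is the
product of the two leading coefficients and a unit, which is nonzero in a domain.
-/

namespace Module.Basis

variable {I R A : Type*} [CommSemiring R] [Semiring A] [Algebra R A]

theorem repr_mul_apply (b : Basis I R A) (x y : A) (k : I) :
    b.repr (x * y) k = ∑ i ∈ (b.repr x).support, ∑ j ∈ (b.repr y).support,
      b.repr x i * b.repr y j * b.repr (b i * b j) k := by
  conv_lhs => rw [← b.linearCombination_repr x, ← b.linearCombination_repr y]
  simp only [Finsupp.linearCombination_apply, Finsupp.sum, Finset.mul_sum, Finset.sum_mul,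
    smul_mul_smul_comm, map_sum, map_smul, Finsupp.coe_finsetSum, Finset.sum_apply,
    Finsupp.smul_apply, smul_eq_mul]
  exact Finset.sum_comm

variable [AddCommMonoid I]

theorem repr_mul_apply_of_add_ne (b : Basis I R A)
    (hb : ∀ i j, ∃ c : R, b i * b j = c • b (i + j)) {i j k : I} (hk : i + j ≠ k) :
    b.repr (b i * b j) k = 0 := by
  obtain ⟨c, hc⟩ := hb i j
  rw [hc, map_smul, repr_self, Finsupp.smul_apply, Finsupp.single_eq_of_ne' hk, smul_zero]

theorem repr_mul_apply_add_of_isGreatest [PartialOrder I] [IsOrderedCancelAddMonoid I]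
    (b : Basis I R A) (hb : ∀ i j, ∃ c : R, b i * b j = c • b (i + j)) {x y : A} {i₀ j₀ : I}
    (hi₀ : IsGreatest ↑(b.repr x).support i₀) (hj₀ : IsGreatest ↑(b.repr y).support j₀) :
    b.repr (x * y) (i₀ + j₀) = b.repr x i₀ * b.repr y j₀ * b.repr (b i₀ * b j₀) (i₀ + j₀) := by
  rw [repr_mul_apply, ← Finset.sum_product', Finset.sum_eq_single_of_mem (i₀, j₀)
    (Finset.mem_product.2 ⟨hi₀.1, hj₀.1⟩)]
  rintro ⟨i, j⟩ hij hne
  obtain ⟨hi, hj⟩ := Finset.mem_product.1 hij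
  have hsum : i + j ≠ i₀ + j₀ := fun h =>
    hne <| Prod.ext_iff.2 <| (add_eq_add_iff_eq_and_eq (hi₀.2 hi) (hj₀.2 hj)).1 h
  rw [repr_mul_apply_of_add_ne b hb hsum, mul_zero]

end Module.Basis

open Module.Basis in
/-- If `R` is a commutative domain, `I` a linearly ordered cancellative additive
commutative monoid, and `A` an associative unital `R`-algebra with a compatibly
ordered basis `b` indexed by `I` (i.e. `b i * b j` is a unit multiple of `b (i+j)`),
then `A` has no zero divisors. -/
theorem stated_skein_compatibly_ordered_basis_domain
    {R : Type*} [CommRing R] [IsDomain R]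
    {I : Type*} [AddCommMonoid I] [LinearOrder I] [IsOrderedCancelAddMonoid I]
    {A : Type*} [Ring A] [Algebra R A]
    (b : Module.Basis I R A)
    (hb : ∀ i j : I, ∃ u : Rˣ, b i * b j = u • b (i + j)) :
    ∀ x y : A, x * y = 0 → x = 0 ∨ y = 0 := by
  intro x y hxy
  by_contra! ⟨hx, hy⟩
  have hsx : (b.repr x).support.Nonempty := by simpa using hx
  have hsy : (b.repr y).support.Nonempty := by simpa using hy
  set i₀ := (b.repr x).support.max' hsx
  set j₀ := (b.repr y).support.max' hsy
  have hb_smul : ∀ i j, ∃ c : R, b i * b j = c • b (i + j) := fun i j =>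
    let ⟨u, hu⟩ := hb i j; ⟨u, hu⟩
  obtain ⟨u, hu⟩ := hb i₀ j₀
  have hlead : b.repr (x * y) (i₀ + j₀) = b.repr x i₀ * b.repr y j₀ * u := by
    rw [repr_mul_apply_add_of_isGreatest b hb_smul (Finset.isGreatest_max' _ hsx)
      (Finset.isGreatest_max' _ hsy), hu, Units.smul_def, map_smul, repr_self,
      Finsupp.smul_apply, Finsupp.single_eq_same, smul_eq_mul, mul_one]
  have hi₀ : b.repr x i₀ ≠ 0 := Finsupp.mem_support_iff.1 (Finset.max'_mem _ hsx)
  have hj₀ : b.repr y j₀ ≠ 0 := Finsupp.mem_support_iff.1 (Finset.max'_mem _ hsy)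
  rw [hxy, map_zero, Finsupp.coe_zero, Pi.zero_apply] at hlead
  exact mul_ne_zero (mul_ne_zero hi₀ hj₀) u.ne_zero hlead.symm
end

section
/- Let R be a commutative integral domain, I a linearly ordered cancellative additive commutative monoid, and A an associative unital R-algebra with a compatibly ordered basis (b_i)_{i ∈ I}. For a nonzero x ∈ A let j(x) ∈ I denote the largest index in the (finite, nonempty) support of the coordinates of x with respect to the basis, and let c(x) ∈ R denote the coordinate of x at j(x) (the leading coefficient). Then for all nonzero x, y ∈ A: (1) every coordinate of x·y at an index strictly greater than j(x) + j(y) vanishes, and (2) there is a unit u of R such that the coordinate of x·y at the index j(x) + j(y) equals u · c(x) · c(y); in particular this coordinate is nonzero and x·y ≠ 0. -/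
/-!
Expanding `x * y` in the basis, the coordinate at `k` is a sum of terms
`c i j * xᵢ * yⱼ` over the pairs `(i, j)` in the supports with `i + j = k`, where `c i j` is
the structure constant of `b i * b j`. Since `i ≤ j(x)` and `j ≤ j(y)`, no pair reaches an
index above `j(x) + j(y)`, and by strict monotonicity of addition the only pair reaching
`j(x) + j(y)` is `(j(x), j(y))`. Over a domain its term is nonzero because `c` takes unit values.
-/

open Finset

namespace Module.Basis

variable {R I A : Type*} [CommSemiring R] [AddCommMonoid I] [Semiring A] [Algebra R A]
  (b : Basis I R A) (c : I → I → R) {x y : A}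

theorem repr_mul_apply_of_mul_eq_smul [DecidableEq I]
    (hc : ∀ i j, b i * b j = c i j • b (i + j)) (k : I) :
    b.repr (x * y) k = ∑ i ∈ (b.repr x).support, ∑ j ∈ (b.repr y).support,
      if i + j = k then c i j * b.repr x i * b.repr y j else 0 := by
  have hxy : x * y = ∑ i ∈ (b.repr x).support, ∑ j ∈ (b.repr y).support,
      (c i j * b.repr x i * b.repr y j) • b (i + j) := by
    conv_lhs => rw [← b.linearCombination_repr x, ← b.linearCombination_repr y]
    simp only [Finsupp.linearCombination_apply, Finsupp.sum, sum_mul_sum, smul_mul_smul_comm,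
      hc, smul_smul]
    refine sum_congr rfl fun i _ => sum_congr rfl fun j _ => ?_
    ring_nf
  simp only [hxy, map_sum, map_smul, repr_self, Finsupp.finsetSum_apply, Finsupp.smul_apply,
    Finsupp.single_apply, smul_eq_mul, mul_ite, mul_one, mul_zero]

variable [LinearOrder I] {jx jy : I}

theorem repr_mul_apply_eq_zero_of_lt [IsOrderedAddMonoid I]
    (hc : ∀ i j, b i * b j = c i j • b (i + j))
    (hx : ∀ i ∈ (b.repr x).support, i ≤ jx) (hy : ∀ j ∈ (b.repr y).support, j ≤ jy)
    {k : I} (hk : jx + jy < k) : b.repr (x * y) k = 0 := by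
  classical
  rw [b.repr_mul_apply_of_mul_eq_smul c hc]
  refine sum_eq_zero fun i hi => sum_eq_zero fun j hj => if_neg ?_
  rintro rfl
  exact (add_le_add (hx i hi) (hy j hj)).not_gt hk

theorem repr_mul_apply_add_of_isGreatest_s1 [IsOrderedCancelAddMonoid I]
    (hc : ∀ i j, b i * b j = c i j • b (i + j))
    (hjx : IsGreatest ((b.repr x).support : Set I) jx)
    (hjy : IsGreatest ((b.repr y).support : Set I) jy) :
    b.repr (x * y) (jx + jy) = c jx jy * b.repr x jx * b.repr y jy := by
  classical
  have only_top : ∀ i ∈ (b.repr x).support, ∀ j ∈ (b.repr y).support,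
      i + j = jx + jy ↔ i = jx ∧ j = jy := fun i hi j hj =>
    add_eq_add_iff_eq_and_eq (hjx.2 hi) (hjy.2 hj)
  rw [b.repr_mul_apply_of_mul_eq_smul c hc,
    sum_eq_single_of_mem jx hjx.1 fun i hi hne => sum_eq_zero fun j hj =>
      if_neg fun h => hne ((only_top i hi j hj).1 h).1,
    sum_eq_single_of_mem jy hjy.1 fun j hj hne =>
      if_neg fun h => hne ((only_top jx hjx.1 j hj).1 h).2]
  exact if_pos rfl

end Module.Basis

theorem stated_skein_leading_term_general
    {R : Type*} [CommRing R] [IsDomain R]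
    {I : Type*} [AddCommMonoid I] [LinearOrder I] [IsOrderedCancelAddMonoid I]
    {A : Type*} [Ring A] [Algebra R A]
    (b : Module.Basis I R A)
    (hb : ∀ i j : I, ∃ u : Rˣ, b i * b j = u • b (i + j))
    (x y : A)
    (jx jy : I)
    (hjx : IsGreatest (((b.repr x).support : Finset I) : Set I) jx)
    (hjy : IsGreatest (((b.repr y).support : Finset I) : Set I) jy) :
    (∀ k : I, jx + jy < k → b.repr (x * y) k = 0) ∧
      (∃ u : Rˣ, b.repr (x * y) (jx + jy) = (u : R) * b.repr x jx * b.repr y jy) ∧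
      b.repr (x * y) (jx + jy) ≠ 0 ∧ x * y ≠ 0 := by
  choose u hu using hb
  have hc : ∀ i j, b i * b j = (u i j : R) • b (i + j) := hu
  have top := b.repr_mul_apply_add_of_isGreatest_s1 _ hc hjx hjy
  have top_ne : b.repr (x * y) (jx + jy) ≠ 0 := by
    rw [top]
    exact mul_ne_zero (mul_ne_zero (u jx jy).ne_zero (Finsupp.mem_support_iff.mp hjx.1))
      (Finsupp.mem_support_iff.mp hjy.1)
  refine ⟨fun k => b.repr_mul_apply_eq_zero_of_lt _ hc (fun i hi => hjx.2 hi)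
    (fun j hj => hjy.2 hj), ⟨u jx jy, top⟩, top_ne, fun h => top_ne ?_⟩
  rw [h, map_zero, Finsupp.zero_apply]

/-- Leading-term computation for an algebra with a compatibly ordered basis over a
commutative domain: for nonzero `x, y` with leading indices `jx, jy` (the greatest
elements of the supports of their coordinate functions), every coordinate of `x * y`
at an index strictly greater than `jx + jy` vanishes, and the coordinate of `x * y`
at `jx + jy` is a unit times the product of the leading coefficients of `x` and `y`;
in particular it is nonzero and `x * y ≠ 0`. -/
theorem stated_skein_leading_term
    {R : Type*} [CommRing R] [IsDomain R]
    {I : Type*} [AddCommMonoid I] [LinearOrder I] [IsOrderedCancelAddMonoid I]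
    {A : Type*} [Ring A] [Algebra R A]
    (b : Module.Basis I R A)
    (hb : ∀ i j : I, ∃ u : Rˣ, b i * b j = u • b (i + j))
    (x y : A) (hx : x ≠ 0) (hy : y ≠ 0)
    (jx jy : I)
    (hjx : IsGreatest (((b.repr x).support : Finset I) : Set I) jx)
    (hjy : IsGreatest (((b.repr y).support : Finset I) : Set I) jy) :
    (∀ k : I, jx + jy < k → b.repr (x * y) k = 0) ∧
      (∃ u : Rˣ, b.repr (x * y) (jx + jy) = (u : R) * b.repr x jx * b.repr y jy) ∧
      b.repr (x * y) (jx + jy) ≠ 0 ∧ x * y ≠ 0 :=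
  stated_skein_leading_term_general b hb x y jx jy hjx hjy
end

section
/- Let R be a commutative integral domain, let I and J be linearly ordered cancellative additive commutative monoids, and let A and B be associative unital R-algebras equipped with compatibly ordered bases indexed by I and J respectively. Then the R-algebra A ⊗_R B (tensor product over R, with its natural algebra structure) has no zero divisors: if z · w = 0 in A ⊗_R B then z = 0 or w = 0. -/
/-!
If `b i * b j = u i j • b (i + j)` with units `u i j`, then `A` is a monoid algebra of `I` over
`R` twisted by the unit cocycle `u`. As for ordinary monoid algebras, when `I` has unique sums
(e.g. `I` is linearly ordered and cancellative, or a product of such) and `z, w ≠ 0`, some index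
`i₀ + j₀` is reached by exactly one pair of support indices, and the coefficient of `z * w` there
is `z i₀ * w j₀ * u i₀ j₀ ≠ 0`. The tensor basis `bA i ⊗ bB j` of `A ⊗[R] B` is again twisted
multiplicative, with index monoid `I × J`.
-/

open scoped TensorProduct

namespace Module.Basis

section UniqueSums

variable {R ι A : Type*} [CommRing R] [Ring A] [Algebra R A] [Add ι]

theorem repr_mul_apply_add_of_uniqueAdd (b : Basis ι R A) (u : ι → ι → Rˣ)
    (hu : ∀ i j, b i * b j = u i j • b (i + j)) {z w : A} {i₀ j₀ : ι}
    (h : UniqueAdd (b.repr z).support (b.repr w).support i₀ j₀) :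
    b.repr (z * w) (i₀ + j₀) = b.repr z i₀ * b.repr w j₀ * u i₀ j₀ := by
  classical
  have hcoeff : ∀ i j k, b.repr (b i * b j) k = if i + j = k then (u i j : R) else 0 := by
    intro i j k
    rw [hu, Units.smul_def, map_smul, repr_self, Finsupp.smul_apply, Finsupp.single_apply,
      smul_ite, smul_eq_mul, mul_one, smul_zero]
  rw [← LinearMap.mul_apply' (R := R), ← LinearMap.sum_repr_mul_repr_mul b b]
  simp only [Finsupp.sum, map_sum, map_smul, LinearMap.mul_apply', Finsupp.coe_finsetSum,
    Finset.sum_apply, Finsupp.smul_apply, hcoeff, ← Finset.sum_product']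
  refine (Finset.sum_eq_single (i₀, j₀) ?_ ?_).trans ?_
  · rintro ⟨i, j⟩ hij hne
    rw [Finset.mem_product] at hij
    have hsum : i + j ≠ i₀ + j₀ := fun he => hne (Prod.ext_iff.mpr (h hij.1 hij.2 he))
    simp [hsum]
  · intro hnot
    simp only [Finset.mem_product, not_and_or, Finsupp.notMem_support_iff] at hnot
    rcases hnot with h | h <;> simp [h]
  · simp [mul_assoc]

theorem noZeroDivisors_of_mul_eq_units_smul [NoZeroDivisors R] [UniqueSums ι]
    (b : Basis ι R A) (u : ι → ι → Rˣ) (hu : ∀ i j, b i * b j = u i j • b (i + j)) :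
    NoZeroDivisors A where
  eq_zero_or_eq_zero_of_mul_eq_zero {z w} hzw := by
    contrapose! hzw
    simp only [ne_eq, ← b.repr.map_eq_zero_iff, ← Finsupp.support_nonempty_iff] at hzw
    obtain ⟨i₀, hi₀, j₀, hj₀, h⟩ := UniqueSums.uniqueAdd_of_nonempty hzw.1 hzw.2
    rw [Finsupp.mem_support_iff] at hi₀ hj₀
    intro hzero
    have hcoeff := b.repr_mul_apply_add_of_uniqueAdd u hu h
    rw [hzero, map_zero, Finsupp.zero_apply, eq_comm, Units.mul_left_eq_zero] at hcoeff
    exact mul_ne_zero hi₀ hj₀ hcoeff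

end UniqueSums

section TensorProduct

variable {R ι κ A B : Type*} [CommRing R] [Ring A] [Algebra R A] [Ring B] [Algebra R B]
  [Add ι] [Add κ]

theorem tensorProduct_mul_tensorProduct (bA : Basis ι R A) (bB : Basis κ R B)
    (uA : ι → ι → Rˣ) (huA : ∀ i j, bA i * bA j = uA i j • bA (i + j))
    (uB : κ → κ → Rˣ) (huB : ∀ i j, bB i * bB j = uB i j • bB (i + j)) (p q : ι × κ) :
    bA.tensorProduct bB p * bA.tensorProduct bB q =
      (uA p.1 q.1 * uB p.2 q.2) • bA.tensorProduct bB (p + q) := by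
  simp only [tensorProduct_apply', Algebra.TensorProduct.tmul_mul_tmul, huA, huB, Prod.fst_add,
    Prod.snd_add, Units.smul_def, Units.val_mul, TensorProduct.smul_tmul_smul]

end TensorProduct

end Module.Basis

/-- If `R` is a commutative domain and `A`, `B` are associative unital `R`-algebras
with compatibly ordered bases indexed by linearly ordered cancellative additive
commutative monoids `I` and `J` respectively, then the tensor product algebra
`A ⊗[R] B` has no zero divisors. -/
theorem stated_skein_tensor_product_domain
    {R : Type*} [CommRing R] [IsDomain R]
    {I J : Type*} [AddCommMonoid I] [LinearOrder I] [IsOrderedCancelAddMonoid I]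
    [AddCommMonoid J] [LinearOrder J] [IsOrderedCancelAddMonoid J]
    {A B : Type*} [Ring A] [Algebra R A] [Ring B] [Algebra R B]
    (bA : Module.Basis I R A) (bB : Module.Basis J R B)
    (hbA : ∀ i j : I, ∃ u : Rˣ, bA i * bA j = u • bA (i + j))
    (hbB : ∀ i j : J, ∃ u : Rˣ, bB i * bB j = u • bB (i + j)) :
    ∀ z w : A ⊗[R] B, z * w = 0 → z = 0 ∨ w = 0 := by
  choose uA huA using hbA
  choose uB huB using hbB
  have : NoZeroDivisors (A ⊗[R] B) :=
    (bA.tensorProduct bB).noZeroDivisors_of_mul_eq_units_smul _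
      (Module.Basis.tensorProduct_mul_tensorProduct bA bB uA huA uB huB)
  exact fun _ _ => eq_zero_or_eq_zero_of_mul_eq_zero
end

section
/- With notation as in the context (q-commuting invertible elements y_a, y_b, y_c in an R-algebra Y, scalars C^ε_{ε'}, and Weyl-normalized elements α(ε,ε'), β(ε,ε'), γ(ε,ε')), for all signs ε, ε' ∈ {+1, −1} the following two identities hold in Y: α(−,ε) · α(+,ε') = q² · α(+,ε) · α(−,ε') − q^{5/2} · C^ε_{ε'} · 1, and α(ε,−) · α(ε',+) = q² · α(ε,+) · α(ε',−) − q^{5/2} · C^ε_{ε'} · 1. -/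
/-- The scalars `C^ε_{ε'}`: `C^+_+ = C^-_- = 0`, `C^+_- = q^{-1/2}`,
`C^-_+ = -q^{-5/2}`, where `q2 = q^{1/2}`. -/
def skeinC {R : Type*} [CommRing R] (q2 : Rˣ) (ε ε' : ℤ) : R :=
  if ε = 1 ∧ ε' = -1 then ((q2 ^ (-1 : ℤ) : Rˣ) : R)
  else if ε = -1 ∧ ε' = 1 then -((q2 ^ (-5 : ℤ) : Rˣ) : R)
  else 0

/-- The Weyl-normalized product of stated arcs: `0` if `(ε, ε') = (-1, 1)`, and
`q^{-εε'/2} · u^ε · v^{ε'}` otherwise (where `q2 = q^{1/2}`, so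
`q^{-εε'/2} = q2^{-εε'}`). -/
noncomputable def weylArc {R : Type*} [CommRing R] (q2 : Rˣ)
    {Y : Type*} [Ring Y] [Algebra R Y] (u v : Yˣ) (ε ε' : ℤ) : Y :=
  if ε = -1 ∧ ε' = 1 then 0
  else algebraMap R Y ((q2 ^ (-(ε * ε')) : Rˣ) : R) * ((u ^ ε : Yˣ) : Y) * ((v ^ ε' : Yˣ) : Y)

lemma qswap_inv {Y : Type*} [Ring Y] (u v : Yˣ) (s : Y)
    (hs : ∀ x : Y, s * x = x * s)
    (h : (u : Y) * v = s * ((v : Y) * u)) :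
    ((v : Y)) * ((u⁻¹ : Yˣ) : Y) = s * (((u⁻¹ : Yˣ) : Y) * v) := by
  calc (v : Y) * ((u⁻¹ : Yˣ) : Y)
      = ((u⁻¹ : Yˣ) : Y) * (((u : Y) * v) * ((u⁻¹ : Yˣ) : Y)) := by
        simp [mul_assoc]
    _ = ((u⁻¹ : Yˣ) : Y) * ((s * ((v : Y) * u)) * ((u⁻¹ : Yˣ) : Y)) := by rw [h]
    _ = s * (((u⁻¹ : Yˣ) : Y) * v) := by
        simp only [mul_assoc]
        rw [Units.mul_inv, mul_one, ← mul_assoc, ← hs ((u⁻¹ : Yˣ) : Y), mul_assoc]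

lemma qswap_flip {Y : Type*} [Ring Y] (u v : Yˣ) (s t : Y)
    (hst : t * s = 1)
    (h : (u : Y) * v = s * ((v : Y) * u)) :
    (v : Y) * u = t * ((u : Y) * v) := by
  rw [h, ← mul_assoc, hst, one_mul]

/-- For `q`-commuting invertible elements `y_a, y_b, y_c` of an `R`-algebra `Y`
(Chekhov–Fock triangle relations, with `q = (q^{1/2})²`) and the Weyl-normalized
arcs `α(ε,ε') = [y_c^ε y_b^{ε'}]` (and `α(-,+) = 0`), one has for all signs
`ε, ε' ∈ {±1}`:
`α(-,ε) α(+,ε') = q² α(+,ε) α(-,ε') - q^{5/2} C^ε_{ε'} · 1` and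
`α(ε,-) α(ε',+) = q² α(ε,+) α(ε',-) - q^{5/2} C^ε_{ε'} · 1`. -/
theorem quantum_trace_relation_alpha_alpha
    {R : Type*} [CommRing R] (q2 : Rˣ)
    {Y : Type*} [Ring Y] [Algebra R Y]
    (ya yb yc : Yˣ)
    (hba : (yb : Y) * ya = algebraMap R Y ((q2 ^ (2 : ℤ) : Rˣ) : R) * ((ya : Y) * yb))
    (hcb : (yc : Y) * yb = algebraMap R Y ((q2 ^ (2 : ℤ) : Rˣ) : R) * ((yb : Y) * yc))
    (hac : (ya : Y) * yc = algebraMap R Y ((q2 ^ (2 : ℤ) : Rˣ) : R) * ((yc : Y) * ya))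
    (ε ε' : ℤ) (hε : ε = 1 ∨ ε = -1) (hε' : ε' = 1 ∨ ε' = -1) :
    (weylArc q2 yc yb (-1) ε * weylArc q2 yc yb 1 ε' =
      algebraMap R Y ((q2 ^ (4 : ℤ) : Rˣ) : R) *
        (weylArc q2 yc yb 1 ε * weylArc q2 yc yb (-1) ε') -
      algebraMap R Y (((q2 ^ (5 : ℤ) : Rˣ) : R) * skeinC q2 ε ε')) ∧
    (weylArc q2 yc yb ε (-1) * weylArc q2 yc yb ε' 1 =
      algebraMap R Y ((q2 ^ (4 : ℤ) : Rˣ) : R) *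
        (weylArc q2 yc yb ε 1 * weylArc q2 yc yb ε' (-1)) -
      algebraMap R Y (((q2 ^ (5 : ℤ) : Rˣ) : R) * skeinC q2 ε ε')) := by
  clear hba hac
  set Q : ℤ → Y := fun n => algebraMap R Y ((q2 ^ n : Rˣ) : R) with hQ
  have hQmul : ∀ m n : ℤ, Q m * Q n = Q (m + n) := by
    intro m n
    simp [hQ, ← map_mul, ← Units.val_mul, ← zpow_add]
  have hQc : ∀ (n : ℤ) (x : Y), Q n * x = x * Q n := fun n x => Algebra.commutes _ _
  have hQ0 : Q 0 = 1 := by simp [hQ]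
  have hmerge : ∀ (m n : ℤ) (x : Y), Q m * (Q n * x) = Q (m + n) * x := by
    intro m n x; rw [← mul_assoc, hQmul]
  have hmove : ∀ (n : ℤ) (x y : Y), x * (Q n * y) = Q n * (x * y) := by
    intro n x y; rw [← mul_assoc, ← hQc, mul_assoc]
  have hcollect : ∀ (m n : ℤ) (x y : Y), (Q m * x) * (Q n * y) = Q (m + n) * (x * y) := by
    intro m n x y; rw [mul_assoc, hmove, hmerge]
  have hinv1 : Q (-2) * Q 2 = 1 := by rw [hQmul]; norm_num [hQ0]
  have hinv2 : Q 2 * Q (-2) = 1 := by rw [hQmul]; norm_num [hQ0]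
  -- basic q-commutation relations
  have hcb2 : (yc : Y) * yb = Q 2 * ((yb : Y) * yc) := hcb
  have hbc : (yb : Y) * yc = Q (-2) * ((yc : Y) * yb) := qswap_flip _ _ _ _ hinv1 hcb2
  have h1 : (yb : Y) * ((yc⁻¹ : Yˣ) : Y) = Q 2 * (((yc⁻¹ : Yˣ) : Y) * yb) :=
    qswap_inv yc yb _ (hQc 2) hcb2
  have h2 : ((yc⁻¹ : Yˣ) : Y) * ((yb⁻¹ : Yˣ) : Y) =
      Q 2 * (((yb⁻¹ : Yˣ) : Y) * ((yc⁻¹ : Yˣ) : Y)) :=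
    qswap_inv yb ((yc⁻¹ : Yˣ)) _ (hQc 2) h1
  have h2f : ((yb⁻¹ : Yˣ) : Y) * ((yc⁻¹ : Yˣ) : Y) =
      Q (-2) * (((yc⁻¹ : Yˣ) : Y) * ((yb⁻¹ : Yˣ) : Y)) :=
    qswap_flip _ _ _ _ hinv1 h2
  have h3 : (yc : Y) * ((yb⁻¹ : Yˣ) : Y) = Q (-2) * (((yb⁻¹ : Yˣ) : Y) * yc) :=
    qswap_inv yb yc _ (hQc (-2)) hbc
  have h3f : ((yb⁻¹ : Yˣ) : Y) * yc = Q 2 * ((yc : Y) * ((yb⁻¹ : Yˣ) : Y)) :=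
    qswap_flip _ _ _ _ hinv2 h3
  -- core word identities
  have E1 : ((yc : Y) * yb) * (((yc⁻¹ : Yˣ) : Y) * ((yb⁻¹ : Yˣ) : Y)) = Q 2 := by
    have hb : (yb : Y) * (((yc⁻¹ : Yˣ) : Y) * ((yb⁻¹ : Yˣ) : Y)) = Q 2 * ((yc⁻¹ : Yˣ) : Y) := by
      rw [← mul_assoc, h1, mul_assoc, mul_assoc, Units.mul_inv, mul_one]
    rw [mul_assoc, hb, hmove, Units.mul_inv, mul_one]
  have E2 : (((yc⁻¹ : Yˣ) : Y) * ((yb⁻¹ : Yˣ) : Y)) * ((yc : Y) * yb) = Q 2 := by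
    have hb : ((yb⁻¹ : Yˣ) : Y) * ((yc : Y) * yb) = Q 2 * (yc : Y) := by
      rw [← mul_assoc, h3f, mul_assoc, mul_assoc, Units.inv_mul, mul_one]
    rw [mul_assoc, hb, hmove, Units.inv_mul, mul_one]
  have E3a : (((yc⁻¹ : Yˣ) : Y) * ((yb⁻¹ : Yˣ) : Y)) * ((yc : Y) * ((yb⁻¹ : Yˣ) : Y)) =
      Q 2 * (((yb⁻¹ : Yˣ) : Y) * ((yb⁻¹ : Yˣ) : Y)) := by
    have hb : ((yb⁻¹ : Yˣ) : Y) * ((yc : Y) * ((yb⁻¹ : Yˣ) : Y)) =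
        Q 2 * ((yc : Y) * (((yb⁻¹ : Yˣ) : Y) * ((yb⁻¹ : Yˣ) : Y))) := by
      rw [← mul_assoc, h3f, mul_assoc, mul_assoc]
    rw [mul_assoc, hb, hmove, Units.inv_mul_cancel_left]
  have E3b : ((yc : Y) * ((yb⁻¹ : Yˣ) : Y)) * (((yc⁻¹ : Yˣ) : Y) * ((yb⁻¹ : Yˣ) : Y)) =
      Q (-2) * (((yb⁻¹ : Yˣ) : Y) * ((yb⁻¹ : Yˣ) : Y)) := by
    have hb : ((yb⁻¹ : Yˣ) : Y) * (((yc⁻¹ : Yˣ) : Y) * ((yb⁻¹ : Yˣ) : Y)) =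
        Q (-2) * (((yc⁻¹ : Yˣ) : Y) * (((yb⁻¹ : Yˣ) : Y) * ((yb⁻¹ : Yˣ) : Y))) := by
      rw [← mul_assoc, h2f, mul_assoc, mul_assoc]
    rw [mul_assoc, hb, hmove, Units.mul_inv_cancel_left]
  have E4a : ((yc : Y) * ((yb⁻¹ : Yˣ) : Y)) * ((yc : Y) * yb) =
      Q 2 * ((yc : Y) * (yc : Y)) := by
    have hb : ((yb⁻¹ : Yˣ) : Y) * ((yc : Y) * yb) = Q 2 * (yc : Y) := by
      rw [← mul_assoc, h3f, mul_assoc, mul_assoc, Units.inv_mul, mul_one]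
    rw [mul_assoc, hb, hmove]
  have E4b : ((yc : Y) * yb) * ((yc : Y) * ((yb⁻¹ : Yˣ) : Y)) =
      Q (-2) * ((yc : Y) * (yc : Y)) := by
    have hb : (yb : Y) * ((yc : Y) * ((yb⁻¹ : Yˣ) : Y)) = Q (-2) * (yc : Y) := by
      rw [← mul_assoc, hbc, mul_assoc, mul_assoc, Units.mul_inv, mul_one]
    rw [mul_assoc, hb, hmove]
  -- values of the arcs
  have w_pp : weylArc q2 yc yb 1 1 = Q (-1) * ((yc : Y) * yb) := by
    norm_num [weylArc, hQ, mul_assoc]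
  have w_pm : weylArc q2 yc yb 1 (-1) = Q 1 * ((yc : Y) * ((yb⁻¹ : Yˣ) : Y)) := by
    norm_num [weylArc, hQ, mul_assoc, zpow_neg_one]
  have w_mp : weylArc q2 yc yb (-1) 1 = 0 := by
    norm_num [weylArc]
  have w_mm : weylArc q2 yc yb (-1) (-1) =
      Q (-1) * (((yc⁻¹ : Yˣ) : Y) * ((yb⁻¹ : Yˣ) : Y)) := by
    norm_num [weylArc, hQ, mul_assoc, zpow_neg_one]
  -- values of the skein constants
  have c_pp : skeinC q2 (1 : ℤ) 1 = (0 : R) := by norm_num [skeinC]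
  have c_mm : skeinC q2 (-1 : ℤ) (-1) = (0 : R) := by norm_num [skeinC]
  have c_pm : skeinC q2 (1 : ℤ) (-1) = ((q2 ^ (-1 : ℤ) : Rˣ) : R) := by norm_num [skeinC]
  have c_mp : skeinC q2 (-1 : ℤ) 1 = -((q2 ^ (-5 : ℤ) : Rˣ) : R) := by norm_num [skeinC]
  have hA4 : algebraMap R Y (((q2 ^ (5 : ℤ) : Rˣ) : R) * ((q2 ^ (-1 : ℤ) : Rˣ) : R)) = Q 4 := by
    rw [← Units.val_mul, ← zpow_add]
    norm_num [hQ]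
  have hA0 : algebraMap R Y (((q2 ^ (5 : ℤ) : Rˣ) : R) * -((q2 ^ (-5 : ℤ) : Rˣ) : R)) =
      -(1 : Y) := by
    rw [mul_neg, map_neg, ← Units.val_mul, ← zpow_add]
    norm_num
  have hQ4 : algebraMap R Y ((q2 ^ (4 : ℤ) : Rˣ) : R) = Q 4 := rfl
  -- the eight cases
  rcases hε with rfl | rfl <;> rcases hε' with rfl | rfl <;> constructor
  · rw [w_mp, c_pp]; simp
  · rw [w_pm, w_pp, c_pp, hQ4]
    simp only [hcollect, hmerge]
    rw [E4a, E4b]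
    simp only [hmerge]
    norm_num
  · rw [w_mp, w_pp, w_mm, c_pm, hA4, hQ4, zero_mul]
    simp only [hcollect, hmerge]
    rw [E1]
    simp only [hQmul]
    norm_num
  · rw [w_mp, w_pp, w_mm, c_pm, hA4, hQ4, mul_zero]
    simp only [hcollect, hmerge]
    rw [E1]
    simp only [hQmul]
    norm_num
  · rw [w_mm, w_pp, w_mp, c_mp, hA0, hQ4, mul_zero]
    simp only [hcollect, hmerge]
    rw [E2]
    simp only [hQmul]
    norm_num [hQ0]
  · rw [w_mm, w_pp, w_mp, c_mp, hA0, hQ4, zero_mul]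
    simp only [hcollect, hmerge]
    rw [E2]
    simp only [hQmul]
    norm_num [hQ0]
  · rw [w_mm, w_pm, c_mm, hQ4]
    simp only [hcollect, hmerge]
    rw [E3a, E3b]
    simp only [hmerge]
    norm_num
  · rw [w_mp, c_mm]; simp
end

section
/- With notation as in the context (q-commuting invertible elements y_a, y_b, y_c in an R-algebra Y, scalars C^ε_{ε'}, and Weyl-normalized elements α(ε,ε'), β(ε,ε'), γ(ε,ε')), for all signs μ, μ', ε, ε' ∈ {+1, −1} the following identity holds in Y: β(μ,ε) · α(μ',ε') = q · α(ε,ε') · β(μ,μ') − q² · C^ε_{μ'} · γ(ε',μ). -/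
/-!
Every term is a scalar multiple of the normally ordered monomial `y_a^μ y_c^(ε+μ') y_b^ε'`:
reordering powers of `q`-commuting units only produces powers of `q`, and the `γ` term, which
lacks a `y_c` factor, only survives when `C^ε_{μ'} ≠ 0`, i.e. when `ε + μ' = 0`. The identity
thus reduces to an identity between Laurent monomials in `q^{1/2}`, checked on the 16 sign patterns.
-/

theorem zpow_mul_zpow_of_mul_eq_mul {G : Type*} [Group G] {z u v : G} (hz : ∀ g, Commute z g)
    (h : u * v = z * (v * u)) (m n : ℤ) : u ^ m * v ^ n = z ^ (m * n) * (v ^ n * u ^ m) := by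
  have hv : SemiconjBy u (v ^ n) (z ^ n * v ^ n) := by
    have := (show SemiconjBy u v (z * v) by rw [SemiconjBy, h, mul_assoc]).zpow_right n
    rwa [(hz v).mul_zpow] at this
  have hu : SemiconjBy (v ^ n) u (z ^ (-n) * u) := by
    rw [SemiconjBy, mul_assoc, hv.eq, zpow_neg, mul_assoc, inv_mul_cancel_left]
  have hvu : v ^ n * u ^ m = z ^ (-n * m) * (u ^ m * v ^ n) := by
    rw [(hu.zpow_right m).eq, ((hz u).zpow_left (-n)).mul_zpow, ← zpow_mul, mul_assoc]
  rw [hvu, ← mul_assoc, ← zpow_add, show m * n + -n * m = 0 by ring, zpow_zero, one_mul]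

section QuantumTorus

variable {R : Type*} [CommRing R] {Y : Type*} [Ring Y] [Algebra R Y]

theorem mul_eq_inv_smul_of_mul_eq_smul {u v : Y} {s : Rˣ} (h : u * v = (s : R) • (v * u)) :
    v * u = ((s⁻¹ : Rˣ) : R) • (u * v) := by
  rw [h, smul_smul, Units.inv_mul, one_smul]

theorem Units.val_zpow_mul_zpow_of_mul_eq_smul {u v : Yˣ} {s : Rˣ}
    (h : (u : Y) * v = (s : R) • ((v : Y) * u)) (m n : ℤ) :
    ((u ^ m * v ^ n : Yˣ) : Y) = ((s ^ (m * n) : Rˣ) : R) • ((v ^ n * u ^ m : Yˣ) : Y) := by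
  set z : Yˣ := Units.map (algebraMap R Y : R →* Y) s
  have hsmul : ∀ (k : ℤ) (g : Yˣ), ((z ^ k * g : Yˣ) : Y) = ((s ^ k : Rˣ) : R) • (g : Y) := by
    intro k g
    rw [← map_zpow, Units.val_mul, Algebra.smul_def]
    rfl
  have hz : ∀ g, Commute z g := fun g => Units.ext (Algebra.commutes _ _)
  have huv : u * v = z * (v * u) := by
    ext
    rw [← zpow_one z, hsmul, zpow_one]
    exact h
  rw [zpow_mul_zpow_of_mul_eq_mul hz huv, hsmul]

variable {a b c : Yˣ} {q : Rˣ}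

theorem triangle_monomial_reorder (hba : (b : Y) * a = (q : R) • ((a : Y) * b))
    (hcb : (c : Y) * b = (q : R) • ((b : Y) * c)) (hac : (a : Y) * c = (q : R) • ((c : Y) * a))
    (ε ε' μ μ' : ℤ) :
    ((c ^ ε * b ^ ε' * (a ^ μ * c ^ μ') : Yˣ) : Y) =
      ((q ^ (ε' * μ - ε * μ - ε' * μ') : Rˣ) : R) • ((a ^ μ * c ^ (ε + μ') * b ^ ε' : Yˣ) : Y) := by
  have hba' := Units.val_zpow_mul_zpow_of_mul_eq_smul hba ε' μ
  have hca := Units.val_zpow_mul_zpow_of_mul_eq_smul (mul_eq_inv_smul_of_mul_eq_smul hac) ε μ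
  have hbc := Units.val_zpow_mul_zpow_of_mul_eq_smul (mul_eq_inv_smul_of_mul_eq_smul hcb) ε' μ'
  rw [zpow_add, mul_assoc (a ^ μ), mul_assoc (c ^ ε)]
  simp only [Units.val_mul, mul_assoc] at hba' hca hbc ⊢
  rw [← mul_assoc ((b ^ ε' : Yˣ) : Y), hba']
  simp only [mul_smul_comm, smul_mul_assoc, mul_assoc]
  rw [← mul_assoc ((c ^ ε : Yˣ) : Y), hca, hbc]
  simp only [mul_smul_comm, smul_mul_assoc, smul_smul, mul_assoc, ← Units.val_mul]
  congr 2
  group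

variable (q2 : Rˣ)

def weylCoef (ε ε' : ℤ) : R :=
  if ε = -1 ∧ ε' = 1 then 0 else ((q2 ^ (-(ε * ε')) : Rˣ) : R)

theorem weylArc_eq_weylCoef_smul (u v : Yˣ) (ε ε' : ℤ) :
    weylArc q2 u v ε ε' = weylCoef q2 ε ε' • ((u ^ ε * v ^ ε' : Yˣ) : Y) := by
  unfold weylArc weylCoef
  split_ifs
  · rw [zero_smul]
  · rw [Units.val_mul, Algebra.smul_def, mul_assoc]

theorem skeinC_eq_zero_of_add_ne_zero {ε ε' : ℤ} (h : ε + ε' ≠ 0) : skeinC q2 ε ε' = 0 := by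
  unfold skeinC
  split_ifs <;> first | rfl | omega

theorem weylCoef_exchange {μ μ' ε ε' : ℤ}
    (hμ : μ = 1 ∨ μ = -1) (hμ' : μ' = 1 ∨ μ' = -1) (hε : ε = 1 ∨ ε = -1) (hε' : ε' = 1 ∨ ε' = -1) :
    weylCoef q2 μ ε * weylCoef q2 μ' ε' =
      ((q2 ^ (2 : ℤ) : Rˣ) : R) * (weylCoef q2 ε ε' * weylCoef q2 μ μ' *
        (((q2 ^ (2 : ℤ)) ^ (ε' * μ - ε * μ - ε' * μ') : Rˣ) : R)) -
      ((q2 ^ (4 : ℤ) : Rˣ) : R) * skeinC q2 ε μ' *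
        (weylCoef q2 ε' μ * (((q2 ^ (2 : ℤ)) ^ (ε' * μ) : Rˣ) : R)) := by
  rcases hμ with rfl | rfl <;> rcases hμ' with rfl | rfl <;>
    rcases hε with rfl | rfl <;> rcases hε' with rfl | rfl <;>
    norm_num only [weylCoef, skeinC, and_true, and_false, true_and, false_and, if_true, if_false,
      zero_mul, mul_zero, sub_zero, zero_sub, neg_mul, mul_neg, neg_neg, sub_self,
      ← Units.val_mul, ← Units.val_neg, ← zpow_mul, ← zpow_add]

end QuantumTorus

/-- For `q`-commuting invertible elements `y_a, y_b, y_c` of an `R`-algebra `Y`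
(Chekhov–Fock triangle relations, with `q = (q^{1/2})²`) and the Weyl-normalized
arcs `α(ε,ε') = [y_c^ε y_b^{ε'}]`, `β(ε,ε') = [y_a^ε y_c^{ε'}]`,
`γ(ε,ε') = [y_b^ε y_a^{ε'}]` (each vanishing on `(-,+)`), one has for all signs
`μ, μ', ε, ε' ∈ {±1}`:
`β(μ,ε) α(μ',ε') = q α(ε,ε') β(μ,μ') - q² C^ε_{μ'} γ(ε',μ)`. -/
theorem quantum_trace_relation_beta_alpha
    {R : Type*} [CommRing R] (q2 : Rˣ)
    {Y : Type*} [Ring Y] [Algebra R Y]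
    (ya yb yc : Yˣ)
    (hba : (yb : Y) * ya = algebraMap R Y ((q2 ^ (2 : ℤ) : Rˣ) : R) * ((ya : Y) * yb))
    (hcb : (yc : Y) * yb = algebraMap R Y ((q2 ^ (2 : ℤ) : Rˣ) : R) * ((yb : Y) * yc))
    (hac : (ya : Y) * yc = algebraMap R Y ((q2 ^ (2 : ℤ) : Rˣ) : R) * ((yc : Y) * ya))
    (μ μ' ε ε' : ℤ) (hμ : μ = 1 ∨ μ = -1) (hμ' : μ' = 1 ∨ μ' = -1)
    (hε : ε = 1 ∨ ε = -1) (hε' : ε' = 1 ∨ ε' = -1) :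
    weylArc q2 ya yc μ ε * weylArc q2 yc yb μ' ε' =
      algebraMap R Y ((q2 ^ (2 : ℤ) : Rˣ) : R) *
        (weylArc q2 yc yb ε ε' * weylArc q2 ya yc μ μ') -
      algebraMap R Y (((q2 ^ (4 : ℤ) : Rˣ) : R) * skeinC q2 ε μ') *
        weylArc q2 yb ya ε' μ := by
  rw [← Algebra.smul_def] at hba hcb hac
  set M : Y := ((ya ^ μ * yc ^ (ε + μ') * yb ^ ε' : Yˣ) : Y) with hM
  have hβα : weylArc q2 ya yc μ ε * weylArc q2 yc yb μ' ε' =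
      (weylCoef q2 μ ε * weylCoef q2 μ' ε') • M := by
    rw [weylArc_eq_weylCoef_smul, weylArc_eq_weylCoef_smul, smul_mul_smul_comm, ← Units.val_mul,
      mul_assoc, ← mul_assoc (yc ^ ε), ← zpow_add, ← mul_assoc]
  have hαβ : weylArc q2 yc yb ε ε' * weylArc q2 ya yc μ μ' =
      (weylCoef q2 ε ε' * weylCoef q2 μ μ' *
        (((q2 ^ (2 : ℤ)) ^ (ε' * μ - ε * μ - ε' * μ') : Rˣ) : R)) • M := by
    rw [weylArc_eq_weylCoef_smul, weylArc_eq_weylCoef_smul, smul_mul_smul_comm, ← Units.val_mul,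
      triangle_monomial_reorder hba hcb hac, smul_smul]
  have hγ : skeinC q2 ε μ' • weylArc q2 yb ya ε' μ =
      (skeinC q2 ε μ' * (weylCoef q2 ε' μ * (((q2 ^ (2 : ℤ)) ^ (ε' * μ) : Rˣ) : R))) • M := by
    rw [weylArc_eq_weylCoef_smul, Units.val_zpow_mul_zpow_of_mul_eq_smul hba, smul_smul,
      smul_smul, ← mul_assoc]
    rcases eq_or_ne (ε + μ') 0 with h | h
    · rw [hM, h, zpow_zero, mul_one]
    · rw [skeinC_eq_zero_of_add_ne_zero q2 h, zero_mul, zero_mul, zero_smul, zero_smul]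
  rw [hβα, hαβ, ← Algebra.smul_def, ← Algebra.smul_def, mul_smul ((q2 ^ (4 : ℤ) : Rˣ) : R), hγ,
    smul_smul, smul_smul, ← sub_smul, ← mul_assoc ((q2 ^ (4 : ℤ) : Rˣ) : R),
    weylCoef_exchange q2 hμ hμ' hε hε']
end

section
/- With notation as in the context (q-commuting invertible elements y_a, y_b, y_c in an R-algebra Y, scalars C^ε_{ε'}, and Weyl-normalized elements α(ε,ε'), β(ε,ε'), γ(ε,ε')), for all signs ε, ε' ∈ {+1, −1} the following two identities hold in Y: α(−,ε) · β(ε',+) = q² · α(+,ε) · β(ε',−) − q^{5/2} · γ(ε,ε'), and α(ε,−) · γ(+,ε') = q² · α(ε,+) · γ(−,ε') + q^{−1/2} · β(ε',ε). -/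
lemma cont_mul' {Y : Type*} [Ring Y] {s x y : Y} (h : x * y = s * (y * x)) (z : Y) :
    x * (y * z) = s * (y * (x * z)) := by
  rw [← mul_assoc, h, mul_assoc, mul_assoc]

lemma flip_scalar' {R Y : Type*} [CommRing R] [Ring Y] [Algebra R Y] {s t : R} (hst : t * s = 1)
    {x y : Y} (h : x * y = algebraMap R Y s * (y * x)) :
    y * x = algebraMap R Y t * (x * y) := by
  rw [h, ← mul_assoc, ← map_mul, hst, map_one, one_mul]

lemma step' {R Y : Type*} [CommRing R] [Ring Y] [Algebra R Y] {s t : R} (hst : s * t = 1)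
    (x : Y) (y : Yˣ) (h : x * ↑y = algebraMap R Y s * (↑y * x)) :
    x * ↑y⁻¹ = algebraMap R Y t * ((↑y⁻¹ : Y) * x) := by
  have key : (↑y⁻¹ : Y) * x = algebraMap R Y s * (x * ↑y⁻¹) := by
    calc (↑y⁻¹ : Y) * x = ↑y⁻¹ * ((x * ↑y) * ↑y⁻¹) := by
          rw [mul_assoc, Units.mul_inv, mul_one]
      _ = ↑y⁻¹ * ((algebraMap R Y s * (↑y * x)) * ↑y⁻¹) := by rw [h]
      _ = algebraMap R Y s * (x * ↑y⁻¹) := by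
          rw [← mul_assoc, ← mul_assoc, ← Algebra.commutes s ((↑y⁻¹ : Y)), mul_assoc,
            mul_assoc, mul_assoc, Units.inv_mul_cancel_left]
  exact flip_scalar' (by rw [mul_comm]; exact hst) key

lemma qswap' {R Y : Type*} [CommRing R] [Ring Y] [Algebra R Y] (q2 : Rˣ) (u v : Yˣ)
    (h : (u : Y) * v = algebraMap R Y ((q2 ^ (2 : ℤ) : Rˣ) : R) * ((v : Y) * u)) :
    ∀ m n : ℤ, m = 1 ∨ m = -1 → n = 1 ∨ n = -1 →
      ((u ^ m : Yˣ) : Y) * ((v ^ n : Yˣ) : Y) =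
        algebraMap R Y ((q2 ^ (2 * m * n) : Rˣ) : R) *
          (((v ^ n : Yˣ) : Y) * ((u ^ m : Yˣ) : Y)) := by
  have hst : ((q2 ^ (2 : ℤ) : Rˣ) : R) * ((q2 ^ (-2 : ℤ) : Rˣ) : R) = 1 := by
    rw [← Units.val_mul, ← zpow_add]; norm_num
  have hts : ((q2 ^ (-2 : ℤ) : Rˣ) : R) * ((q2 ^ (2 : ℤ) : Rˣ) : R) = 1 := by
    rw [mul_comm]; exact hst
  have g2 : (u : Y) * ↑v⁻¹ = algebraMap R Y ((q2 ^ (-2:ℤ) : Rˣ) : R) * ((↑v⁻¹ : Y) * u) :=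
    step' hst _ v h
  have hvu : (v : Y) * u = algebraMap R Y ((q2 ^ (-2:ℤ) : Rˣ) : R) * ((u : Y) * v) :=
    flip_scalar' hts h
  have g3' : (v : Y) * ↑u⁻¹ = algebraMap R Y ((q2 ^ (2:ℤ) : Rˣ) : R) * ((↑u⁻¹ : Y) * v) :=
    step' hts _ u hvu
  have g3 : (↑u⁻¹ : Y) * v = algebraMap R Y ((q2 ^ (-2:ℤ) : Rˣ) : R) * ((v : Y) * ↑u⁻¹) :=
    flip_scalar' hts g3'
  have g4 : (↑u⁻¹ : Y) * ↑v⁻¹ = algebraMap R Y ((q2 ^ (2:ℤ) : Rˣ) : R) * ((↑v⁻¹ : Y) * ↑u⁻¹) :=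
    step' hts _ v g3
  intro m n hm hn
  rcases hm with rfl | rfl <;> rcases hn with rfl | rfl
  · rw [show ((2:ℤ)*1*1) = 2 by norm_num]; simp only [zpow_one]; exact h
  · rw [show ((2:ℤ)*1*(-1)) = -2 by norm_num]
    simp only [zpow_one, zpow_neg_one]; exact g2
  · rw [show ((2:ℤ)*(-1)*1) = -2 by norm_num]
    simp only [zpow_one, zpow_neg_one]; exact g3
  · rw [show ((2:ℤ)*(-1)*(-1)) = 2 by norm_num]
    simp only [zpow_neg_one]; exact g4

/-- For `q`-commuting invertible elements `y_a, y_b, y_c` of an `R`-algebra `Y`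
(Chekhov–Fock triangle relations, with `q = (q^{1/2})²`) and the Weyl-normalized
arcs `α(ε,ε') = [y_c^ε y_b^{ε'}]`, `β(ε,ε') = [y_a^ε y_c^{ε'}]`,
`γ(ε,ε') = [y_b^ε y_a^{ε'}]` (each vanishing on `(-,+)`), one has for all signs
`ε, ε' ∈ {±1}`:
`α(-,ε) β(ε',+) = q² α(+,ε) β(ε',-) - q^{5/2} γ(ε,ε')` and
`α(ε,-) γ(+,ε') = q² α(ε,+) γ(-,ε') + q^{-1/2} β(ε',ε)`. -/
theorem quantum_trace_relation_alpha_beta_gamma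
    {R : Type*} [CommRing R] (q2 : Rˣ)
    {Y : Type*} [Ring Y] [Algebra R Y]
    (ya yb yc : Yˣ)
    (hba : (yb : Y) * ya = algebraMap R Y ((q2 ^ (2 : ℤ) : Rˣ) : R) * ((ya : Y) * yb))
    (hcb : (yc : Y) * yb = algebraMap R Y ((q2 ^ (2 : ℤ) : Rˣ) : R) * ((yb : Y) * yc))
    (hac : (ya : Y) * yc = algebraMap R Y ((q2 ^ (2 : ℤ) : Rˣ) : R) * ((yc : Y) * ya))
    (ε ε' : ℤ) (hε : ε = 1 ∨ ε = -1) (hε' : ε' = 1 ∨ ε' = -1) :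
    (weylArc q2 yc yb (-1) ε * weylArc q2 ya yc ε' 1 =
      algebraMap R Y ((q2 ^ (4 : ℤ) : Rˣ) : R) *
        (weylArc q2 yc yb 1 ε * weylArc q2 ya yc ε' (-1)) -
      algebraMap R Y ((q2 ^ (5 : ℤ) : Rˣ) : R) * weylArc q2 yb ya ε ε') ∧
    (weylArc q2 yc yb ε (-1) * weylArc q2 yb ya 1 ε' =
      algebraMap R Y ((q2 ^ (4 : ℤ) : Rˣ) : R) *
        (weylArc q2 yc yb ε 1 * weylArc q2 yb ya (-1) ε') +
      algebraMap R Y ((q2 ^ (-1 : ℤ) : Rˣ) : R) * weylArc q2 ya yc ε' ε) := by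
  have hst : ((q2 ^ (2 : ℤ) : Rˣ) : R) * ((q2 ^ (-2 : ℤ) : Rˣ) : R) = 1 := by
    rw [← Units.val_mul, ← zpow_add]; norm_num
  have hts : ((q2 ^ (-2 : ℤ) : Rˣ) : R) * ((q2 ^ (2 : ℤ) : Rˣ) : R) = 1 := by
    rw [mul_comm]; exact hst
  have ba : (((yb : Yˣ) ^ (1 : ℤ) : Yˣ) : Y) * (((ya : Yˣ) ^ (1 : ℤ) : Yˣ) : Y) =
      algebraMap R Y ((q2 ^ (2 : ℤ) : Rˣ) : R) *
        ((((ya : Yˣ) ^ (1 : ℤ) : Yˣ) : Y) * (((yb : Yˣ) ^ (1 : ℤ) : Yˣ) : Y)) := by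
    have := qswap' q2 yb ya hba (1) (1) (by norm_num) (by norm_num)
    rwa [show ((2 : ℤ) * (1) * (1)) = (2 : ℤ) by norm_num] at this
  have ba2 : (((yb : Yˣ) ^ (1 : ℤ) : Yˣ) : Y) * (((ya : Yˣ) ^ (-1 : ℤ) : Yˣ) : Y) =
      algebraMap R Y ((q2 ^ (-2 : ℤ) : Rˣ) : R) *
        ((((ya : Yˣ) ^ (-1 : ℤ) : Yˣ) : Y) * (((yb : Yˣ) ^ (1 : ℤ) : Yˣ) : Y)) := by
    have := qswap' q2 yb ya hba (1) (-1) (by norm_num) (by norm_num)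
    rwa [show ((2 : ℤ) * (1) * (-1)) = (-2 : ℤ) by norm_num] at this
  have b2a : (((yb : Yˣ) ^ (-1 : ℤ) : Yˣ) : Y) * (((ya : Yˣ) ^ (1 : ℤ) : Yˣ) : Y) =
      algebraMap R Y ((q2 ^ (-2 : ℤ) : Rˣ) : R) *
        ((((ya : Yˣ) ^ (1 : ℤ) : Yˣ) : Y) * (((yb : Yˣ) ^ (-1 : ℤ) : Yˣ) : Y)) := by
    have := qswap' q2 yb ya hba (-1) (1) (by norm_num) (by norm_num)
    rwa [show ((2 : ℤ) * (-1) * (1)) = (-2 : ℤ) by norm_num] at this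
  have b2a2 : (((yb : Yˣ) ^ (-1 : ℤ) : Yˣ) : Y) * (((ya : Yˣ) ^ (-1 : ℤ) : Yˣ) : Y) =
      algebraMap R Y ((q2 ^ (2 : ℤ) : Rˣ) : R) *
        ((((ya : Yˣ) ^ (-1 : ℤ) : Yˣ) : Y) * (((yb : Yˣ) ^ (-1 : ℤ) : Yˣ) : Y)) := by
    have := qswap' q2 yb ya hba (-1) (-1) (by norm_num) (by norm_num)
    rwa [show ((2 : ℤ) * (-1) * (-1)) = (2 : ℤ) by norm_num] at this
  have cb : (((yc : Yˣ) ^ (1 : ℤ) : Yˣ) : Y) * (((yb : Yˣ) ^ (1 : ℤ) : Yˣ) : Y) =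
      algebraMap R Y ((q2 ^ (2 : ℤ) : Rˣ) : R) *
        ((((yb : Yˣ) ^ (1 : ℤ) : Yˣ) : Y) * (((yc : Yˣ) ^ (1 : ℤ) : Yˣ) : Y)) := by
    have := qswap' q2 yc yb hcb (1) (1) (by norm_num) (by norm_num)
    rwa [show ((2 : ℤ) * (1) * (1)) = (2 : ℤ) by norm_num] at this
  have cb2 : (((yc : Yˣ) ^ (1 : ℤ) : Yˣ) : Y) * (((yb : Yˣ) ^ (-1 : ℤ) : Yˣ) : Y) =
      algebraMap R Y ((q2 ^ (-2 : ℤ) : Rˣ) : R) *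
        ((((yb : Yˣ) ^ (-1 : ℤ) : Yˣ) : Y) * (((yc : Yˣ) ^ (1 : ℤ) : Yˣ) : Y)) := by
    have := qswap' q2 yc yb hcb (1) (-1) (by norm_num) (by norm_num)
    rwa [show ((2 : ℤ) * (1) * (-1)) = (-2 : ℤ) by norm_num] at this
  have c2b : (((yc : Yˣ) ^ (-1 : ℤ) : Yˣ) : Y) * (((yb : Yˣ) ^ (1 : ℤ) : Yˣ) : Y) =
      algebraMap R Y ((q2 ^ (-2 : ℤ) : Rˣ) : R) *
        ((((yb : Yˣ) ^ (1 : ℤ) : Yˣ) : Y) * (((yc : Yˣ) ^ (-1 : ℤ) : Yˣ) : Y)) := by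
    have := qswap' q2 yc yb hcb (-1) (1) (by norm_num) (by norm_num)
    rwa [show ((2 : ℤ) * (-1) * (1)) = (-2 : ℤ) by norm_num] at this
  have c2b2 : (((yc : Yˣ) ^ (-1 : ℤ) : Yˣ) : Y) * (((yb : Yˣ) ^ (-1 : ℤ) : Yˣ) : Y) =
      algebraMap R Y ((q2 ^ (2 : ℤ) : Rˣ) : R) *
        ((((yb : Yˣ) ^ (-1 : ℤ) : Yˣ) : Y) * (((yc : Yˣ) ^ (-1 : ℤ) : Yˣ) : Y)) := by
    have := qswap' q2 yc yb hcb (-1) (-1) (by norm_num) (by norm_num)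
    rwa [show ((2 : ℤ) * (-1) * (-1)) = (2 : ℤ) by norm_num] at this
  have ca : (((yc : Yˣ) ^ (1 : ℤ) : Yˣ) : Y) * (((ya : Yˣ) ^ (1 : ℤ) : Yˣ) : Y) =
      algebraMap R Y ((q2 ^ (-2 : ℤ) : Rˣ) : R) *
        ((((ya : Yˣ) ^ (1 : ℤ) : Yˣ) : Y) * (((yc : Yˣ) ^ (1 : ℤ) : Yˣ) : Y)) := by
    have h0 := qswap' q2 ya yc hac (1) (1) (by norm_num) (by norm_num)
    rw [show ((2 : ℤ) * (1) * (1)) = (2 : ℤ) by norm_num] at h0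
    exact flip_scalar' hts h0
  have ca2 : (((yc : Yˣ) ^ (1 : ℤ) : Yˣ) : Y) * (((ya : Yˣ) ^ (-1 : ℤ) : Yˣ) : Y) =
      algebraMap R Y ((q2 ^ (2 : ℤ) : Rˣ) : R) *
        ((((ya : Yˣ) ^ (-1 : ℤ) : Yˣ) : Y) * (((yc : Yˣ) ^ (1 : ℤ) : Yˣ) : Y)) := by
    have h0 := qswap' q2 ya yc hac (-1) (1) (by norm_num) (by norm_num)
    rw [show ((2 : ℤ) * (-1) * (1)) = (-2 : ℤ) by norm_num] at h0
    exact flip_scalar' hst h0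
  have c2a : (((yc : Yˣ) ^ (-1 : ℤ) : Yˣ) : Y) * (((ya : Yˣ) ^ (1 : ℤ) : Yˣ) : Y) =
      algebraMap R Y ((q2 ^ (2 : ℤ) : Rˣ) : R) *
        ((((ya : Yˣ) ^ (1 : ℤ) : Yˣ) : Y) * (((yc : Yˣ) ^ (-1 : ℤ) : Yˣ) : Y)) := by
    have h0 := qswap' q2 ya yc hac (1) (-1) (by norm_num) (by norm_num)
    rw [show ((2 : ℤ) * (1) * (-1)) = (-2 : ℤ) by norm_num] at h0
    exact flip_scalar' hst h0
  have c2a2 : (((yc : Yˣ) ^ (-1 : ℤ) : Yˣ) : Y) * (((ya : Yˣ) ^ (-1 : ℤ) : Yˣ) : Y) =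
      algebraMap R Y ((q2 ^ (-2 : ℤ) : Rˣ) : R) *
        ((((ya : Yˣ) ^ (-1 : ℤ) : Yˣ) : Y) * (((yc : Yˣ) ^ (-1 : ℤ) : Yˣ) : Y)) := by
    have h0 := qswap' q2 ya yc hac (-1) (-1) (by norm_num) (by norm_num)
    rw [show ((2 : ℤ) * (-1) * (-1)) = (2 : ℤ) by norm_num] at h0
    exact flip_scalar' hts h0
  have kk : ∀ j k : ℤ, (algebraMap R Y ((q2 ^ j : Rˣ) : R)) * (algebraMap R Y ((q2 ^ k : Rˣ) : R)) =
      algebraMap R Y ((q2 ^ (j + k) : Rˣ) : R) := fun j k => by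
    rw [← map_mul, ← Units.val_mul, ← zpow_add]
  have kk' : ∀ (j k : ℤ) (x : Y), (algebraMap R Y ((q2 ^ j : Rˣ) : R)) *
      ((algebraMap R Y ((q2 ^ k : Rˣ) : R)) * x) =
      algebraMap R Y ((q2 ^ (j + k) : Rˣ) : R) * x := fun j k x => by
    rw [← mul_assoc, kk]
  have mv : ∀ (k : ℤ) (w : Yˣ) (z : Y), (↑w : Y) * (algebraMap R Y ((q2 ^ k : Rˣ) : R) * z) =
      algebraMap R Y ((q2 ^ k : Rˣ) : R) * ((↑w : Y) * z) := fun k w z => by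
    rw [← mul_assoc, ← Algebra.commutes, mul_assoc]
  have mv0 : ∀ (k : ℤ) (w : Yˣ), (↑w : Y) * algebraMap R Y ((q2 ^ k : Rˣ) : R) =
      algebraMap R Y ((q2 ^ k : Rˣ) : R) * (↑w : Y) := fun k w => (Algebra.commutes _ _).symm
  have cc1 : ∀ (w : Yˣ) (z : Y), ((w ^ (1 : ℤ) : Yˣ) : Y) * (((w ^ (-1 : ℤ) : Yˣ) : Y) * z) = z := by
    intro w z
    rw [← mul_assoc, ← Units.val_mul, ← zpow_add]; norm_num
  have cc2 : ∀ (w : Yˣ) (z : Y), ((w ^ (-1 : ℤ) : Yˣ) : Y) * (((w ^ (1 : ℤ) : Yˣ) : Y) * z) = z := by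
    intro w z
    rw [← mul_assoc, ← Units.val_mul, ← zpow_add]; norm_num
  have cc3 : ∀ (w : Yˣ), ((w ^ (1 : ℤ) : Yˣ) : Y) * ((w ^ (-1 : ℤ) : Yˣ) : Y) = 1 := by
    intro w; rw [← Units.val_mul, ← zpow_add]; norm_num
  have cc4 : ∀ (w : Yˣ), ((w ^ (-1 : ℤ) : Yˣ) : Y) * ((w ^ (1 : ℤ) : Yˣ) : Y) = 1 := by
    intro w; rw [← Units.val_mul, ← zpow_add]; norm_num
  rcases hε with rfl | rfl <;> rcases hε' with rfl | rfl <;> constructor <;>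
    simp only [weylArc, Int.reduceNeg, Int.reduceMul, Int.reduceAdd, reduceIte,
      (by norm_num : ¬((1:ℤ) = -1)), (by norm_num : ¬((-1:ℤ) = 1)),
      and_true, true_and, and_self, and_false, false_and, if_true, if_false, ite_true, ite_false,
      not_false_eq_true, mul_assoc,
      zero_mul, mul_zero, sub_zero, zero_add, add_zero, sub_self, mul_one, one_mul,
      zpow_zero, Units.val_one, map_one,
      ba, ba2, b2a, b2a2, cb, cb2, c2b, c2b2, ca, ca2, c2a, c2a2, cont_mul' ba, cont_mul' ba2, cont_mul' b2a, cont_mul' b2a2, cont_mul' cb, cont_mul' cb2, cont_mul' c2b, cont_mul' c2b2, cont_mul' ca, cont_mul' ca2, cont_mul' c2a, cont_mul' c2a2, kk, kk', mv, mv0, cc1, cc2, cc3, cc4]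
end
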